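/- Monotone likelihood ratio of the number-measurement distribution in the radius: for fixed N > 0 and 0 ≤ r < r', the ratio P_{r'}(k)/P_r(k) is strictly increasing in k ∈ ℕ, where P_r(k) = (1/(N+1))(N/(N+1))^k e^{−r²/(N+1)} L_k(−r²/(N(N+1))). -/

import Mathlib

/-- The k-th Laguerre polynomial. -/
noncomputable def laguerre (k : ℕ) (x : ℝ) : ℝ :=
  ∑ j ∈ Finset.range (k + 1), (k.choose j : ℝ) * (-x) ^ j / (j.factorial : ℝ)

/-- Number-measurement outcome distribution on the quantum Gaussian state with
|mean| = r and number parameter N. -/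
noncomputable def Pr (N r : ℝ) (k : ℕ) : ℝ :=
  (1 / (N + 1)) * (N / (N + 1)) ^ k * Real.exp (-r ^ 2 / (N + 1)) *
    laguerre k (-r ^ 2 / (N * (N + 1)))

/-!
With `x = r² / (N (N + 1))` the ratio `P_{r'}(k) / P_r(k)` is a positive constant times
`L_k(-x') / L_k(-x)`, where `x < x'`, so it suffices that
`L_k(-x') L_{k+1}(-x) < L_{k+1}(-x') L_k(-x)`. Writing `L_k(-x) = ∑ C(k, j) x^j / j!` and
symmetrising the double sum, the difference becomes half of
`∑_{i,j} (a_i b_j - a_j b_i)(u_i v_j - u_j v_i)` with `a = C(k+1, ·)`, `b = C(k, ·)`,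
`u_j = x'^j / j!`, `v_j = x^j / j!`. Every term is nonnegative because both `a_j / b_j` and
`u_j / v_j` increase with `j`, and the term `(i, j) = (1, 0)` is positive.
-/

open Finset

section CrossSums

variable {ι : Type*} (s : Finset ι) (a b u v : ι → ℝ)

theorem two_mul_sum_mul_sum_sub_sum_mul_sum :
    2 * ((∑ i ∈ s, a i * u i) * (∑ i ∈ s, b i * v i)
        - (∑ i ∈ s, b i * u i) * (∑ i ∈ s, a i * v i)) =
      ∑ i ∈ s, ∑ j ∈ s, (a i * b j - a j * b i) * (u i * v j - u j * v i) := by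
  have expand : ∀ i j, (a i * b j - a j * b i) * (u i * v j - u j * v i) =
      a i * u i * (b j * v j) - a i * v i * (b j * u j) - b i * u i * (a j * v j)
        + b i * v i * (a j * u j) := fun i j => by ring
  simp only [expand, sum_add_distrib, sum_sub_distrib, ← sum_mul_sum]
  ring

variable {s a b u v}

theorem sum_mul_sum_lt_sum_mul_sum_of_cross [LinearOrder ι]
    (hab : ∀ i ∈ s, ∀ j ∈ s, j ≤ i → a j * b i ≤ a i * b j)
    (huv : ∀ i ∈ s, ∀ j ∈ s, j ≤ i → u j * v i ≤ u i * v j)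
    (hstrict : ∃ i ∈ s, ∃ j ∈ s, a j * b i < a i * b j ∧ u j * v i < u i * v j) :
    (∑ i ∈ s, b i * u i) * (∑ i ∈ s, a i * v i) <
      (∑ i ∈ s, a i * u i) * (∑ i ∈ s, b i * v i) := by
  have hterm : ∀ i ∈ s, ∀ j ∈ s, 0 ≤ (a i * b j - a j * b i) * (u i * v j - u j * v i) := by
    intro i hi j hj
    rcases le_total j i with hji | hij
    · exact mul_nonneg (sub_nonneg.2 (hab i hi j hj hji)) (sub_nonneg.2 (huv i hi j hj hji))
    · exact mul_nonneg_of_nonpos_of_nonpos (sub_nonpos.2 (hab j hj i hi hij))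
        (sub_nonpos.2 (huv j hj i hi hij))
  obtain ⟨i, hi, j, hj, hab_lt, huv_lt⟩ := hstrict
  have hpos : 0 < ∑ i ∈ s, ∑ j ∈ s, (a i * b j - a j * b i) * (u i * v j - u j * v i) :=
    sum_pos' (fun i hi => sum_nonneg (hterm i hi))
      ⟨i, hi, sum_pos' (hterm i hi) ⟨j, hj, mul_pos (sub_pos.2 hab_lt) (sub_pos.2 huv_lt)⟩⟩
  rw [← two_mul_sum_mul_sum_sub_sum_mul_sum] at hpos
  linarith

end CrossSums

theorem Nat.choose_succ_mul_choose_le {n i j : ℕ} (hji : j ≤ i) :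
    (n + 1).choose j * n.choose i ≤ (n + 1).choose i * n.choose j := by
  refine Nat.le_of_mul_le_mul_right ?_ n.succ_pos
  calc (n + 1).choose j * n.choose i * (n + 1)
      = (n + 1).choose j * (n + 1).choose i * (n + 1 - i) := by
        rw [mul_assoc, Nat.choose_mul_succ_eq, mul_assoc]
    _ ≤ (n + 1).choose j * (n + 1).choose i * (n + 1 - j) := by gcongr
    _ = (n + 1).choose i * n.choose j * (n + 1) := by
        rw [mul_assoc ((n + 1).choose i), Nat.choose_mul_succ_eq]; ring

theorem pow_mul_pow_le_pow_mul_pow {x x' : ℝ} (hx : 0 ≤ x) (hxx' : x ≤ x') {i j : ℕ}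
    (hji : j ≤ i) : x' ^ j * x ^ i ≤ x' ^ i * x ^ j := by
  obtain ⟨d, rfl⟩ := Nat.exists_eq_add_of_le hji
  have hx' : 0 ≤ x' := hx.trans hxx'
  calc x' ^ j * x ^ (j + d) = x' ^ j * x ^ j * x ^ d := by ring
    _ ≤ x' ^ j * x ^ j * x' ^ d := by gcongr
    _ = x' ^ (j + d) * x ^ j := by ring

theorem laguerre_neg_eq_sum (k : ℕ) (x : ℝ) {n : ℕ} (hkn : k < n) :
    laguerre k (-x) = ∑ j ∈ range n, (k.choose j : ℝ) * (x ^ j / j.factorial) := by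
  calc laguerre k (-x) = ∑ j ∈ range (k + 1), (k.choose j : ℝ) * (x ^ j / j.factorial) := by
        simp only [laguerre, neg_neg, mul_div_assoc]
    _ = _ := sum_subset (range_subset_range.2 hkn) fun j _ hj => by
        rw [Nat.choose_eq_zero_of_lt (by simp at hj; omega), Nat.cast_zero, zero_mul]

theorem laguerre_neg_pos (k : ℕ) {x : ℝ} (hx : 0 ≤ x) : 0 < laguerre k (-x) := by
  rw [laguerre_neg_eq_sum k x k.lt_succ_self]
  exact sum_pos' (fun j _ => by positivity) ⟨0, by simp, by simp⟩

theorem laguerre_neg_mul_laguerre_neg_succ_lt (k : ℕ) {x x' : ℝ} (hx : 0 ≤ x) (hxx' : x < x') :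
    laguerre k (-x') * laguerre (k + 1) (-x) < laguerre (k + 1) (-x') * laguerre k (-x) := by
  simp only [laguerre_neg_eq_sum k _ (Nat.lt_succ_of_lt k.lt_succ_self),
    laguerre_neg_eq_sum (k + 1) _ (k + 1).lt_succ_self]
  refine sum_mul_sum_lt_sum_mul_sum_of_cross (fun i _ j _ hji => ?_) (fun i _ j _ hji => ?_)
    ⟨1, by simp, 0, by simp, by simp, by simpa using hxx'⟩
  · exact_mod_cast Nat.choose_succ_mul_choose_le hji
  · rw [div_mul_div_comm, div_mul_div_comm, mul_comm (i.factorial : ℝ)]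
    exact div_le_div_of_nonneg_right (pow_mul_pow_le_pow_mul_pow hx hxx'.le hji) (by positivity)

theorem strictMono_laguerre_neg_div_laguerre_neg {x x' : ℝ} (hx : 0 ≤ x) (hxx' : x < x') :
    StrictMono fun k => laguerre k (-x') / laguerre k (-x) :=
  strictMono_nat_of_lt_succ fun k => by
    rw [div_lt_div_iff₀ (laguerre_neg_pos k hx) (laguerre_neg_pos (k + 1) hx)]
    exact laguerre_neg_mul_laguerre_neg_succ_lt k hx hxx'

theorem Pr_div_Pr (N r r' : ℝ) (hN : 0 < N) (k : ℕ) :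
    Pr N r' k / Pr N r k = Real.exp (-r' ^ 2 / (N + 1)) / Real.exp (-r ^ 2 / (N + 1)) *
      (laguerre k (-(r' ^ 2 / (N * (N + 1)))) / laguerre k (-(r ^ 2 / (N * (N + 1))))) := by
  have hL := laguerre_neg_pos k (x := r ^ 2 / (N * (N + 1))) (by positivity)
  simp only [Pr, neg_div]
  field_simp

theorem Pr_monotone_likelihood_ratio (N : ℝ) (hN : 0 < N) (r r' : ℝ)
    (hr : 0 ≤ r) (hrr' : r < r') :
    StrictMono (fun k : ℕ => Pr N r' k / Pr N r k) := by
  have hNN : 0 < N * (N + 1) := by positivity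
  have hxx' : r ^ 2 / (N * (N + 1)) < r' ^ 2 / (N * (N + 1)) :=
    div_lt_div_of_pos_right (pow_lt_pow_left₀ hrr' hr two_ne_zero) hNN
  have hmono := (strictMono_laguerre_neg_div_laguerre_neg (by positivity) hxx').const_mul
    (div_pos (Real.exp_pos (-r' ^ 2 / (N + 1))) (Real.exp_pos (-r ^ 2 / (N + 1))))
  simpa only [Pr_div_Pr N r r' hN] using hmono
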